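/- arXiv:1606.00726 — 2 statements merged into one kernel-verified Lean document; each statement's English description precedes it below -/
import Mathlib

section
/- Let all edge weights satisfy w u v ≥ δ for a fixed real δ > 0, assume every vertex is reachable from the source s (d(v) < ∞ for all v), and let v_1, …, v_n be a bijective enumeration of V with v_1 = s that is a δ-partial-ordering (i < j implies d(v_i) < d(v_j) + δ). Then for every index j and every vertex v_k with an edge to v_j lying on a shortest path to v_j (i.e. d(v_j) = d(v_k) + w(v_k, v_j)), the predecessor appears earlier in the enumeration: k < j. -/
open scoped ENNReal

/-- The length of the path `p 0, p 1, …, p k` in a graph on `Fin n` with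
edge-weight function `w` (where `w u v = ∞` encodes the absence of an edge). -/
noncomputable def pathCost {n : ℕ} (w : Fin n → Fin n → ℝ≥0∞) (p : ℕ → Fin n) (k : ℕ) : ℝ≥0∞ :=
  ∑ i ∈ Finset.range k, w (p i) (p (i + 1))

/-- The shortest-path distance from `s` to `v`: the infimum over all finite paths
from `s` to `v` of their lengths. -/
noncomputable def spDist {n : ℕ} (w : Fin n → Fin n → ℝ≥0∞) (s v : Fin n) : ℝ≥0∞ :=
  ⨅ (k : ℕ) (p : ℕ → Fin n) (_ : p 0 = s) (_ : p k = v), pathCost w p k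

/-- Dijkstra's label recursion, processed according to the enumeration `e` (0-indexed):
`dijkstraD w s e 0` is the initial labelling (`0` at `s`, `∞` elsewhere), and step `j`
relaxes all edges out of the extracted vertex `e j`.  The paper's `D_j` is
`dijkstraD w s e (j-1)`; the extraction value of `v_j` is `dijkstraD w s e (j-1) (e (j-1))`. -/
noncomputable def dijkstraD {n : ℕ} (w : Fin n → Fin n → ℝ≥0∞) (s : Fin n) (e : Fin n → Fin n) :
    ℕ → Fin n → ℝ≥0∞
  | 0 => fun u => if u = s then 0 else ⊤
  | j + 1 => fun u =>
      if h : j < n then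
        min (dijkstraD w s e j u) (dijkstraD w s e j (e ⟨j, h⟩) + w (e ⟨j, h⟩) u)
      else dijkstraD w s e j u

theorem deltaPO_pred_earlier_general {n : ℕ} (w : Fin n → Fin n → ℝ≥0∞) (s : Fin n)
    (δ : ℝ) (hδ : 0 < δ) (hw : ∀ u v : Fin n, ENNReal.ofReal δ ≤ w u v)
    (hreach : ∀ v : Fin n, spDist w s v < ⊤)
    (e : Fin n → Fin n)
    (hPO : ∀ i j : Fin n, i < j → spDist w s (e i) < spDist w s (e j) + ENNReal.ofReal δ)
    (j k : Fin n)
    (hedge : spDist w s (e j) = spDist w s (e k) + w (e k) (e j)) :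
    k < j := by
  have hgap : spDist w s (e k) + ENNReal.ofReal δ ≤ spDist w s (e j) :=
    hedge ▸ add_le_add_right (hw _ _) _
  have hcloser : spDist w s (e k) < spDist w s (e j) :=
    (ENNReal.lt_add_right (hreach _).ne (ENNReal.ofReal_pos.mpr hδ).ne').trans_le hgap
  by_contra! hkj
  rcases hkj.lt_or_eq with hjk | rfl
  · exact (hPO j k hjk).not_ge hgap
  · exact hcloser.false

/-- If all edge weights are at least `δ > 0`, every vertex is reachable from `s`,
and `e` is a bijective enumeration of the vertices starting at `s` that is a
δ-partial-ordering (`i < j → d (e i) < d (e j) + δ`), then whenever the edge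
`(e k, e j)` lies on a shortest path to `e j` (`d (e j) = d (e k) + w (e k) (e j)`),
the predecessor appears earlier in the enumeration: `k < j`. -/
theorem deltaPO_pred_earlier {n : ℕ} (hn : 0 < n) (w : Fin n → Fin n → ℝ≥0∞) (s : Fin n)
    (δ : ℝ) (hδ : 0 < δ) (hw : ∀ u v : Fin n, ENNReal.ofReal δ ≤ w u v)
    (hreach : ∀ v : Fin n, spDist w s v < ⊤)
    (e : Fin n → Fin n) (he : Function.Bijective e) (hes : e ⟨0, hn⟩ = s)
    (hPO : ∀ i j : Fin n, i < j → spDist w s (e i) < spDist w s (e j) + ENNReal.ofReal δ)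
    (j k : Fin n)
    (hedge : spDist w s (e j) = spDist w s (e k) + w (e k) (e j)) :
    k < j :=
  deltaPO_pred_earlier_general w s δ hδ hw hreach e hPO j k hedge
end

section
/- For every bijective enumeration v_1, …, v_n of V with v_1 = s, every step j with 1 ≤ j ≤ n+1, and every vertex v ∈ V, the Dijkstra label is never below the true shortest-path distance: d(v) ≤ D_j(v). -/
open scoped ENNReal

/-!
The distance function `d = spDist w s` vanishes at `s` and satisfies the triangle inequality
`d v ≤ d u + w u v`. The initial labels dominate `d`, and a relaxation step
`D u ↦ min (D u) (D x + w x u)` preserves `d ≤ D` whatever vertex `x` is relaxed.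
-/

section ShortestPath

variable {n : ℕ} (w : Fin n → Fin n → ℝ≥0∞) (s : Fin n)

lemma pathCost_update_succ (p : ℕ → Fin n) (k : ℕ) (v : Fin n) :
    pathCost w (Function.update p (k + 1) v) (k + 1) = pathCost w p k + w (p k) v := by
  rw [pathCost, Finset.sum_range_succ, pathCost]
  congr 1
  · refine Finset.sum_congr rfl fun i hi => ?_
    have hi : i < k := Finset.mem_range.mp hi
    rw [Function.update_of_ne (by omega), Function.update_of_ne (by omega)]
  · rw [Function.update_of_ne (by omega), Function.update_self]

lemma spDist_le_pathCost {v : Fin n} (p : ℕ → Fin n) (k : ℕ) (h0 : p 0 = s) (hk : p k = v) :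
    spDist w s v ≤ pathCost w p k :=
  iInf_le_of_le k <| iInf_le_of_le p <| iInf_le_of_le h0 <| iInf_le _ hk

@[simp]
lemma spDist_self : spDist w s s = 0 :=
  nonpos_iff_eq_zero.mp <| by
    simpa [pathCost] using spDist_le_pathCost w s (fun _ => s) 0 rfl rfl

lemma spDist_le_spDist_add (u v : Fin n) : spDist w s v ≤ spDist w s u + w u v := by
  simp only [spDist, ENNReal.iInf_add]
  refine le_iInf fun k => le_iInf fun p => le_iInf fun h0 => le_iInf fun hk => ?_
  rw [← hk, ← pathCost_update_succ]
  exact spDist_le_pathCost w s _ _ (by rw [Function.update_of_ne (by omega), h0])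
    (Function.update_self ..)

variable (e : Fin n → Fin n)

lemma spDist_le_dijkstraD_zero (v : Fin n) : spDist w s v ≤ dijkstraD w s e 0 v := by
  by_cases hv : v = s
  · simp [hv]
  · simp [dijkstraD, hv]

lemma spDist_le_dijkstraD_succ {j : ℕ} (hj : ∀ u, spDist w s u ≤ dijkstraD w s e j u)
    (v : Fin n) : spDist w s v ≤ dijkstraD w s e (j + 1) v := by
  rw [dijkstraD]
  split
  · exact le_min (hj v) <|
      (spDist_le_spDist_add w s _ v).trans (add_le_add_left (hj _) _)
  · exact hj v

end ShortestPath

theorem spDist_le_dijkstraD_general {n : ℕ} (w : Fin n → Fin n → ℝ≥0∞) (s : Fin n)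
    (e : Fin n → Fin n) :
    ∀ j : ℕ, j ≤ n → ∀ v : Fin n, spDist w s v ≤ dijkstraD w s e j v := by
  rintro j -
  induction j with
  | zero => exact spDist_le_dijkstraD_zero w s e
  | succ j ih => exact spDist_le_dijkstraD_succ w s e ih

/-- For every bijective enumeration of the vertices starting at `s`, at every step
`j` of Dijkstra's label recursion (paper steps `1 ≤ j ≤ n+1`, i.e. 0-indexed
`0 ≤ j ≤ n` here) and every vertex `v`, the label is never below the true
shortest-path distance: `d v ≤ D_j v`. -/
theorem spDist_le_dijkstraD {n : ℕ} (hn : 0 < n) (w : Fin n → Fin n → ℝ≥0∞) (s : Fin n)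
    (e : Fin n → Fin n) (he : Function.Bijective e) (hes : e ⟨0, hn⟩ = s) :
    ∀ j : ℕ, j ≤ n → ∀ v : Fin n, spDist w s v ≤ dijkstraD w s e j v :=
  spDist_le_dijkstraD_general w s e
end
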